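/- Invariance of the full Multihead Attention Block under permutation of its second argument: for all X ∈ ℝ^{n×d}, Y ∈ ℝ^{m×d}, and every permutation τ of {1,…,m}, MAB(X, Π_τ Y) = MAB(X, Y). -/

import Mathlib

open Matrix

/-- The `n × n` permutation matrix of `σ`: `(permMat σ * X) i j = X (σ i) j`,
i.e. row `i` of `Π_σ X` is row `σ(i)` of `X`. -/
noncomputable def permMat {n : ℕ} (σ : Equiv.Perm (Fin n)) : Matrix (Fin n) (Fin n) ℝ :=
  Matrix.of fun i j => if σ i = j then (1 : ℝ) else 0

/-- Row-wise softmax: `softmax M i j = exp (M i j) / ∑ k, exp (M i k)`. -/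
noncomputable def softmax {n m : ℕ} (M : Matrix (Fin n) (Fin m) ℝ) : Matrix (Fin n) (Fin m) ℝ :=
  Matrix.of fun i j => Real.exp (M i j) / ∑ k, Real.exp (M i k)

/-- Single-head attention: `Attn Q K V = softmax (Q Kᵀ / √d) ⬝ V`. -/
noncomputable def Attn {n m d : ℕ} (Q : Matrix (Fin n) (Fin d) ℝ)
    (K V : Matrix (Fin m) (Fin d) ℝ) : Matrix (Fin n) (Fin d) ℝ :=
  softmax ((1 / Real.sqrt d) • (Q * Kᵀ)) * V

/-- Apply a function `φ : ℝᵈ → ℝᵈ` independently to every row of a matrix. -/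
def rowMap {n d : ℕ} (φ : (Fin d → ℝ) → (Fin d → ℝ)) (X : Matrix (Fin n) (Fin d) ℝ) :
    Matrix (Fin n) (Fin d) ℝ :=
  Matrix.of fun i => φ (X i)

/-- Multihead Attention Block with row-wise maps `φ, ψ` (the LayerNorms) and `F`
(the feed-forward network): `MAB X Y = ψ(H + F(H))` where `H = φ(X + Attn(X, Y, Y))`. -/
noncomputable def MAB {n m d : ℕ} (φ ψ F : (Fin d → ℝ) → (Fin d → ℝ))
    (X : Matrix (Fin n) (Fin d) ℝ) (Y : Matrix (Fin m) (Fin d) ℝ) :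
    Matrix (Fin n) (Fin d) ℝ :=
  rowMap ψ (rowMap φ (X + Attn X Y Y) + rowMap F (rowMap φ (X + Attn X Y Y)))

/-! Permuting the keys and values by `τ` permutes the columns of the score matrix `X Yᵀ` by `τ`;
row-wise softmax commutes with column permutations, and in the product with the values the two
copies of `τ` cancel. Hence `Attn(X, Y, Y)`, the only place `Y` enters `MAB`, is unchanged. -/

lemma permMat_eq_permMatrix {n : ℕ} (σ : Equiv.Perm (Fin n)) : permMat σ = σ.permMatrix ℝ := by
  ext i j
  simp [permMat, Equiv.Perm.permMatrix, PEquiv.toMatrix_apply]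

lemma permMat_mul {n : ℕ} {o : Type*} (σ : Equiv.Perm (Fin n)) (Y : Matrix (Fin n) o ℝ) :
    permMat σ * Y = Y.submatrix σ id := by
  rw [permMat_eq_permMatrix]
  exact PEquiv.toMatrix_toPEquiv_mul σ Y

lemma softmax_submatrix {n n' m : ℕ} (M : Matrix (Fin n) (Fin m) ℝ) (e : Fin n' → Fin n)
    (σ : Equiv.Perm (Fin m)) : softmax (M.submatrix e σ) = (softmax M).submatrix e σ := by
  ext i j
  simp only [softmax, Matrix.of_apply, Matrix.submatrix_apply]
  rw [Equiv.sum_comp σ fun k => Real.exp (M (e i) k)]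

lemma Attn_submatrix_keys_values {n m d : ℕ} (Q : Matrix (Fin n) (Fin d) ℝ)
    (K V : Matrix (Fin m) (Fin d) ℝ) (σ : Equiv.Perm (Fin m)) :
    Attn Q (K.submatrix σ id) (V.submatrix σ id) = Attn Q K V := by
  have hscores (c : ℝ) : c • (Q * (K.submatrix σ id)ᵀ) = (c • (Q * Kᵀ)).submatrix id σ := by
    ext i j
    rfl
  rw [Attn, Attn, hscores, softmax_submatrix, submatrix_mul_equiv, submatrix_id_id]

/-- The Multihead Attention Block is invariant under permutation of its second argument:
`MAB X (Π_τ Y) = MAB X Y`. -/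
theorem MAB_invariant_snd {n m d : ℕ} (φ ψ F : (Fin d → ℝ) → (Fin d → ℝ))
    (X : Matrix (Fin n) (Fin d) ℝ) (Y : Matrix (Fin m) (Fin d) ℝ) (τ : Equiv.Perm (Fin m)) :
    MAB φ ψ F X (permMat τ * Y) = MAB φ ψ F X Y := by
  rw [permMat_mul, MAB, MAB, Attn_submatrix_keys_values]
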